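/- arXiv:2410.12666 — 7 statements merged into one kernel-verified Lean document; each statement's English description precedes it below -/
import Mathlib

section
/- Let 1 ≤ p < ∞ and let {F₁ < F₂ < ⋯ < F_m} be a chain of maximal Schreier sets (i.e. each Fⱼ is a maximal Schreier set and max Fⱼ < min F_{j+1}). Then the vector x = Σ_{j=1}^m |Fⱼ|^{-1/p} Σ_{k ∈ Fⱼ} e_k satisfies 1 ≤ ‖x‖_{S_p} ≤ 2^{1/p}, where ‖x‖_{S_p} = sup over nonempty Schreier sets F of (Σ_{n∈F} |x(n)|^p)^{1/p}. -/
open Finset Filter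

/-- A Schreier set: a finite set of naturals whose cardinality is at most its minimum
(elements are automatically positive when nonempty). -/
def IsSchreier (F : Finset ℕ) : Prop := ∀ h : F.Nonempty, F.card ≤ F.min' h

/-- A maximal Schreier set: nonempty with cardinality equal to its minimum. -/
def IsMaxSchreier (F : Finset ℕ) : Prop := ∃ h : F.Nonempty, F.card = F.min' h

/-- A (possibly empty) list of nonempty successive Schreier sets. -/
def SchreierChainList (C : List (Finset ℕ)) : Prop :=
  (∀ F ∈ C, IsSchreier F ∧ F.Nonempty) ∧
  C.Chain' (fun F G => ∀ a ∈ F, ∀ b ∈ G, a < b)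

/-- A Schreier chain: a nonempty finite list of nonempty successive Schreier sets. -/
def IsSchreierChain (C : List (Finset ℕ)) : Prop := C ≠ [] ∧ SchreierChainList C

def chainUnion (C : List (Finset ℕ)) : Finset ℕ := C.foldr (· ∪ ·) ∅

noncomputable def mu (p : ℝ) (x : ℕ → ℝ) (F : Finset ℕ) : ℝ :=
  (∑ n ∈ F, |x n| ^ p) ^ (1 / p)

/-- The p-th Schreier norm of a (finitely supported) sequence. -/
noncomputable def schreierNorm (p : ℝ) (x : ℕ → ℝ) : ℝ :=
  sSup {r | ∃ F : Finset ℕ, IsSchreier F ∧ F.Nonempty ∧ r = mu p x F}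

noncomputable def betaNorm (p : ℝ) (x : ℕ → ℝ) (C : List (Finset ℕ)) : ℝ :=
  ((C.map fun F => (∑ n ∈ F, |x n|) ^ p).sum) ^ (1 / p)

/-- The p-th Baernstein norm of a (finitely supported) sequence. -/
noncomputable def baernsteinNorm (p : ℝ) (x : ℕ → ℝ) : ℝ :=
  sSup {r | ∃ C : List (Finset ℕ), IsSchreierChain C ∧ r = betaNorm p x C}

/-- The Schreier covering number of a finite set. -/
noncomputable def tau1 (A : Finset ℕ) : ℕ :=
  sInf {m | ∃ C : List (Finset ℕ), SchreierChainList C ∧ C.length = m ∧ A ⊆ chainUnion C}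

/-- Increasing enumeration of a set of naturals (0-indexed). -/
noncomputable def enumSet (M : Set ℕ) : ℕ → ℕ := Nat.nth (· ∈ M)

/-- `M(J)`: the image of an index set `J` under the increasing enumeration of `M`. -/
noncomputable def subImage (M : Set ℕ) (J : Finset ℕ) : Finset ℕ := J.image (enumSet M)

/-- The Gasparis–Leung index `ΓL₁(M, N) ∈ ℕ ∪ {∞}`. -/
noncomputable def GLindex (M N : Set ℕ) : ℕ∞ :=
  ⨆ J ∈ {J : Finset ℕ | IsSchreier (subImage N J)}, (tau1 (subImage M J) : ℕ∞)

/-- Flat vector with coefficients |F_j|^{-1/p} on the chain of maximal Schreier sets. -/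
noncomputable def flatVecS (p : ℝ) (m : ℕ) (F : Fin m → Finset ℕ) : ℕ → ℝ :=
  fun n => ∑ j : Fin m, if n ∈ F j then (((F j).card : ℝ) ^ (1 / p))⁻¹ else 0

/-!
On each `F j` the flat vector `x` is constant with `|x n| ^ p = 1 / #(F j)`, so for any `G` the sum
`∑ n ∈ G, |x n| ^ p` equals `∑ j, #(G ∩ F j) / #(F j)`; for `G = F j` this is `1`. If `G` is a
Schreier set and `F i` is the first block meeting `G`, every later block `F j` is maximal with
`min (F j) > min G ≥ #G`, so it has more than `#G` elements: the later blocks contribute at most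
`∑ j, #(G ∩ F j) / #G ≤ 1`, and the first block at most `1`.
-/

open Function

section Disjoint

variable {ι α : Type*}

theorem pairwise_disjoint_of_forall_lt [LinearOrder ι] [Preorder α] {F : ι → Finset α}
    (hsucc : ∀ i j, i < j → ∀ a ∈ F i, ∀ b ∈ F j, a < b) : Pairwise (Disjoint on F) := by
  intro i j hij
  refine disjoint_left.mpr fun a hai haj => ?_
  rcases hij.lt_or_gt with h | h
  · exact lt_irrefl a (hsucc i j h a hai a haj)
  · exact lt_irrefl a (hsucc j i h a haj a hai)

theorem apply_sum_ite_mem {β : Type*} [AddCommMonoid β] [DecidableEq α] {F : ι → Finset α}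
    (hdisj : Pairwise (Disjoint on F)) {f : β → β} (hf : f 0 = 0) (s : Finset ι) (c : ι → β)
    (n : α) :
    f (∑ j ∈ s, if n ∈ F j then c j else 0) = ∑ j ∈ s, if n ∈ F j then f (c j) else 0 := by
  have hsingle : ∀ {j}, n ∈ F j → ∀ i, i ≠ j → n ∉ F i := fun hj i hij hi =>
    disjoint_left.mp (hdisj hij) hi hj
  by_cases h : ∃ j ∈ s, n ∈ F j
  · obtain ⟨j, hjs, hj⟩ := h
    rw [sum_eq_single_of_mem j hjs fun i _ hij => if_neg (hsingle hj i hij),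
      sum_eq_single_of_mem j hjs fun i _ hij => if_neg (hsingle hj i hij), if_pos hj, if_pos hj]
  · push Not at h
    rw [sum_eq_zero fun j hj => if_neg (h j hj), sum_eq_zero fun j hj => if_neg (h j hj), hf]

theorem sum_card_inter_le_card [DecidableEq α] {s : Finset ι} {F : ι → Finset α}
    (hdisj : Pairwise (Disjoint on F)) (G : Finset α) : ∑ j ∈ s, #(G ∩ F j) ≤ #G := by
  rw [← card_biUnion fun i _ j _ hij => (hdisj hij).mono inter_subset_right inter_subset_right]
  exact card_le_card (biUnion_subset.mpr fun _ _ => inter_subset_left)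

theorem sum_card_inter_div_card_le_two [LinearOrder ι] [Fintype ι] [DecidableEq α]
    {F : ι → Finset α} (hdisj : Pairwise (Disjoint on F)) {G : Finset α}
    (hcard : ∀ i j, i < j → (G ∩ F i).Nonempty → #G ≤ #(F j)) :
    ∑ j, (#(G ∩ F j) : ℝ) / #(F j) ≤ 2 := by
  set t := univ.filter fun j => (G ∩ F j).Nonempty
  rcases t.eq_empty_or_nonempty with ht | ht
  · refine (sum_eq_zero fun j _ => ?_).trans_le zero_le_two
    have : G ∩ F j = ∅ := not_nonempty_iff_eq_empty.mp fun h =>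
      (eq_empty_iff_forall_notMem.mp ht) j (mem_filter.mpr ⟨mem_univ j, h⟩)
    simp [this]
  set i := t.min' ht
  have hi : (G ∩ F i).Nonempty := (mem_filter.mp (t.min'_mem ht)).2
  have hterm : ∀ j, (#(G ∩ F j) : ℝ) / #(F j) ≤
      (if j = i then 1 else 0) + (#(G ∩ F j) : ℝ) / #G := by
    intro j
    by_cases hji : j = i
    · rw [if_pos hji]
      exact le_add_of_le_of_nonneg (div_le_one_of_le₀
        (by exact_mod_cast card_le_card inter_subset_right) (Nat.cast_nonneg _)) (by positivity)
    rcases (G ∩ F j).eq_empty_or_nonempty with hj | hj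
    · simp [hj, hji]
    have hij : i < j := lt_of_le_of_ne (t.min'_le j (mem_filter.mpr ⟨mem_univ j, hj⟩))
      (Ne.symm hji)
    have hG : (0 : ℝ) < #G := by exact_mod_cast (hj.mono inter_subset_left).card_pos
    rw [if_neg hji, zero_add]
    exact div_le_div_of_nonneg_left (Nat.cast_nonneg _) hG (by exact_mod_cast hcard i j hij hi)
  calc ∑ j, (#(G ∩ F j) : ℝ) / #(F j)
      ≤ ∑ j, ((if j = i then 1 else 0) + (#(G ∩ F j) : ℝ) / #G) := sum_le_sum fun j _ => hterm j
    _ = 1 + (∑ j, (#(G ∩ F j) : ℝ)) / #G := by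
      rw [sum_add_distrib, sum_ite_eq', if_pos (mem_univ i), ← sum_div]
    _ ≤ 1 + 1 := by
      gcongr
      exact div_le_one_of_le₀ (by exact_mod_cast sum_card_inter_le_card hdisj G)
        (Nat.cast_nonneg _)
    _ = 2 := one_add_one_eq_two

end Disjoint

theorem IsMaxSchreier.isSchreier {B : Finset ℕ} (hB : IsMaxSchreier B) : IsSchreier B :=
  fun _ => hB.2.le

theorem IsSchreier.card_lt_card {G B : Finset ℕ} (hG : IsSchreier G) (hB : IsMaxSchreier B)
    {a : ℕ} (ha : a ∈ G) (hlt : ∀ b ∈ B, a < b) : #G < #B := by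
  obtain ⟨hBne, hBcard⟩ := hB
  calc #G ≤ G.min' ⟨a, ha⟩ := hG ⟨a, ha⟩
    _ ≤ a := G.min'_le a ha
    _ < B.min' hBne := hlt _ (B.min'_mem hBne)
    _ = #B := hBcard.symm

section FlatVector

variable {p : ℝ} {m : ℕ} {F : Fin m → Finset ℕ}

theorem sum_abs_flatVecS_rpow (hp : p ≠ 0) (hdisj : Pairwise (Disjoint on F)) (G : Finset ℕ) :
    ∑ n ∈ G, |flatVecS p m F n| ^ p = ∑ j, (#(G ∩ F j) : ℝ) / #(F j) := by
  have hcoeff : ∀ j, |((#(F j) : ℝ) ^ (1 / p))⁻¹| ^ p = (#(F j) : ℝ)⁻¹ := fun j => by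
    rw [abs_of_nonneg (by positivity), ← Real.inv_rpow (by positivity),
      ← Real.rpow_mul (by positivity), one_div_mul_cancel hp, Real.rpow_one]
  have hpoint : ∀ n, |flatVecS p m F n| ^ p = ∑ j, if n ∈ F j then (#(F j) : ℝ)⁻¹ else 0 :=
    fun n => by
      simp only [flatVecS, apply_sum_ite_mem hdisj (f := fun t : ℝ => |t| ^ p)
        (by simp [Real.zero_rpow hp]), hcoeff]
  simp only [hpoint]
  rw [sum_comm]
  refine sum_congr rfl fun j _ => ?_
  rw [sum_ite_mem, sum_const, nsmul_eq_mul, div_eq_mul_inv]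

theorem mu_flatVecS_self (hp : p ≠ 0) (hdisj : Pairwise (Disjoint on F)) {j : Fin m}
    (hj : (F j).Nonempty) : mu p (flatVecS p m F) (F j) = 1 := by
  have hne : (#(F j) : ℝ) ≠ 0 := by exact_mod_cast hj.card_pos.ne'
  unfold mu
  rw [sum_abs_flatVecS_rpow hp hdisj, sum_eq_single_of_mem j (mem_univ j), inter_self,
    div_self hne, Real.one_rpow]
  intro i _ hij
  simp [disjoint_iff_inter_eq_empty.mp (hdisj hij.symm)]

theorem mu_flatVecS_le (hp : 0 < p) (hmax : ∀ j, IsMaxSchreier (F j))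
    (hsucc : ∀ i j : Fin m, i < j → ∀ a ∈ F i, ∀ b ∈ F j, a < b) {G : Finset ℕ}
    (hG : IsSchreier G) : mu p (flatVecS p m F) G ≤ 2 ^ (1 / p) := by
  have hdisj := pairwise_disjoint_of_forall_lt hsucc
  have hcard : ∀ i j, i < j → (G ∩ F i).Nonempty → #G ≤ #(F j) := by
    rintro i j hij ⟨a, ha⟩
    exact (hG.card_lt_card (hmax j) (mem_inter.mp ha).1
      (hsucc i j hij a (mem_inter.mp ha).2)).le
  unfold mu
  rw [sum_abs_flatVecS_rpow hp.ne' hdisj]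
  exact Real.rpow_le_rpow (sum_nonneg fun _ _ => by positivity)
    (sum_card_inter_div_card_le_two hdisj hcard) (by positivity)

end FlatVector

/-- Norm estimate for flat vectors in the Schreier space S_p. -/
theorem flat_vector_estimate_schreier (p : ℝ) (hp : 1 ≤ p) (m : ℕ) (hm : 1 ≤ m)
    (F : Fin m → Finset ℕ) (hmax : ∀ j, IsMaxSchreier (F j))
    (hsucc : ∀ i j : Fin m, i < j → ∀ a ∈ F i, ∀ b ∈ F j, a < b) :
    1 ≤ schreierNorm p (flatVecS p m F) ∧
      schreierNorm p (flatVecS p m F) ≤ (2 : ℝ) ^ (1 / p) := by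
  have hp0 : 0 < p := zero_lt_one.trans_le hp
  set S := {r | ∃ G : Finset ℕ, IsSchreier G ∧ G.Nonempty ∧ r = mu p (flatVecS p m F) G}
  have hub : ∀ r ∈ S, r ≤ 2 ^ (1 / p) := by
    rintro r ⟨G, hG, -, rfl⟩
    exact mu_flatVecS_le hp0 hmax hsucc hG
  have hone : (1 : ℝ) ∈ S :=
    ⟨F ⟨0, hm⟩, (hmax _).isSchreier, (hmax _).1,
      (mu_flatVecS_self hp0.ne' (pairwise_disjoint_of_forall_lt hsucc) (hmax _).1).symm⟩
  exact ⟨le_csSup ⟨_, hub⟩ hone, csSup_le ⟨1, hone⟩ hub⟩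
end

section
/- Let 1 < p < ∞, and suppose x is a finitely supported nonnegative real sequence whose nonzero coordinates are decreasing. Then x attains its Baernstein norm at some Schreier chain covering its support: there is a Schreier chain C with ⋃C = supp(x) and ‖x‖_{B_p} = β_p(x, C). -/
open Finset Filter

/-!
Let `S` be the support of `x`. Restricting a Schreier chain to `S` (and dropping the blocks that
become empty) keeps it a Schreier chain and does not change `β_p`, and there are only finitely many
Schreier chains inside `S`; so the Baernstein norm is a maximum over chains inside `S`. Among the
maximizers take one that also maximizes the weight `∑ 1/(k+1)` of its elements. If some `n ∈ S`
were not covered, it could be inserted: as a new block `{n}` in front of the first block lying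
after it, or, if `n` falls strictly inside the range of a block `F`, by trading `max F` for `n`.
That trade keeps `F` a Schreier set preceding the later blocks, does not decrease `β_p` because
`x` is decreasing on `S`, and strictly increases the weight, contradicting the choice.
-/

lemma List.finite_setOf_nodup_forall_mem {α : Type*} (T : Finset α) :
    {l : List α | l.Nodup ∧ ∀ a ∈ l, a ∈ T}.Finite := by
  classical
  refine (T.powerset.finite_toSet.biUnion fun U _ =>
    (Multiset.lists U.val).toFinset.finite_toSet).subset ?_
  rintro l ⟨hl, hT⟩
  simp only [Set.mem_iUnion, Finset.mem_coe, Finset.mem_powerset]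
  refine ⟨l.toFinset, fun a ha => hT a (List.mem_toFinset.1 ha), ?_⟩
  rw [Multiset.mem_toFinset, Multiset.mem_lists_iff, List.toFinset_val, hl.dedup]
  rfl

lemma Finset.sum_insert_erase {α M : Type*} [DecidableEq α] [AddCommGroup M] {s : Finset α}
    {a b : α} (ha : a ∉ s) (hb : b ∈ s) (f : α → M) :
    ∑ i ∈ insert a (s.erase b), f i = ∑ i ∈ s, f i + (f a - f b) := by
  rw [sum_insert fun h => ha (mem_of_mem_erase h), sum_erase_eq_sub hb]
  abel

lemma IsSchreier.of_forall_card_le {G : Finset ℕ} (h : ∀ b ∈ G, G.card ≤ b) :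
    IsSchreier G :=
  fun _ => le_min' _ _ _ h

lemma isSchreier_singleton {n : ℕ} (hn : 0 < n) : IsSchreier {n} :=
  .of_forall_card_le (by simpa using Nat.one_le_of_lt hn)

lemma IsSchreier.mono {F G : Finset ℕ} (hF : IsSchreier F) (h : G ⊆ F) : IsSchreier G :=
  fun hG => (card_le_card h).trans <| (hF (hG.mono h)).trans <| min'_le _ _ (h (G.min'_mem hG))

lemma IsSchreier.insert_erase {F : Finset ℕ} {a n M : ℕ} (hF : IsSchreier F) (hM : M ∈ F)
    (ha : a ∈ F) (han : a ≤ n) : IsSchreier (insert n (F.erase M)) := by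
  have hmin : ∀ b ∈ F, F.card ≤ b := fun b hb => (hF ⟨a, ha⟩).trans (F.min'_le b hb)
  have hcard : (insert n (F.erase M)).card ≤ F.card :=
    (card_insert_le _ _).trans (card_erase_add_one hM).le
  refine .of_forall_card_le fun b hb => hcard.trans ?_
  rcases mem_insert.1 hb with rfl | hb
  · exact (hmin a ha).trans han
  · exact hmin b (mem_of_mem_erase hb)

lemma chainUnion_cons (F : Finset ℕ) (C : List (Finset ℕ)) :
    chainUnion (F :: C) = F ∪ chainUnion C := rfl

lemma mem_chainUnion {a : ℕ} {C : List (Finset ℕ)} :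
    a ∈ chainUnion C ↔ ∃ F ∈ C, a ∈ F := by
  induction C with
  | nil => simp [chainUnion]
  | cons F C ih => simp [chainUnion_cons, ih]

def Precedes (F G : Finset ℕ) : Prop := ∀ a ∈ F, ∀ b ∈ G, a < b

lemma pairwise_precedes_of_isChain {C : List (Finset ℕ)} (hne : ∀ F ∈ C, F.Nonempty)
    (hC : C.IsChain Precedes) : C.Pairwise Precedes := by
  let R (F G : Finset ℕ) : Prop := Precedes F G ∧ G.Nonempty
  have : Trans R R R := ⟨fun ⟨hFG, c, hc⟩ ⟨hGH, hH⟩ =>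
    ⟨fun a ha b hb => (hFG a ha c hc).trans (hGH c hc b hb), hH⟩⟩
  exact (List.IsChain.imp_of_mem_imp (fun _ G _ hG h => ⟨h, hne G hG⟩) hC).pairwise.imp And.left

def IsSchreierChainIn (S : Finset ℕ) (C : List (Finset ℕ)) : Prop :=
  (∀ F ∈ C, IsSchreier F ∧ F.Nonempty ∧ F ⊆ S) ∧ C.Pairwise Precedes

namespace IsSchreierChainIn

variable {S F : Finset ℕ} {C : List (Finset ℕ)}

lemma nil : IsSchreierChainIn S [] := ⟨by simp, .nil⟩

lemma cons (hF : IsSchreier F) (hFne : F.Nonempty) (hFS : F ⊆ S) (hC : IsSchreierChainIn S C)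
    (hlt : ∀ a ∈ F, ∀ b ∈ chainUnion C, a < b) : IsSchreierChainIn S (F :: C) := by
  refine ⟨?_, List.Pairwise.cons (fun G hG a ha b hb => ?_) hC.2⟩
  · simpa [hF, hFne, hFS] using hC.1
  · exact hlt a ha b (mem_chainUnion.2 ⟨G, hG, hb⟩)

lemma head (hC : IsSchreierChainIn S (F :: C)) : IsSchreier F ∧ F.Nonempty ∧ F ⊆ S :=
  hC.1 F List.mem_cons_self

lemma tail (hC : IsSchreierChainIn S (F :: C)) : IsSchreierChainIn S C :=
  ⟨fun G hG => hC.1 G (List.mem_cons_of_mem F hG), (List.pairwise_cons.1 hC.2).2⟩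

lemma head_lt (hC : IsSchreierChainIn S (F :: C)) : ∀ a ∈ F, ∀ b ∈ chainUnion C, a < b :=
  fun a ha b hb => by
    obtain ⟨G, hG, hbG⟩ := mem_chainUnion.1 hb
    exact (List.pairwise_cons.1 hC.2).1 G hG a ha b hbG

lemma schreierChainList (hC : IsSchreierChainIn S C) : SchreierChainList C :=
  ⟨fun F hF => ⟨(hC.1 F hF).1, (hC.1 F hF).2.1⟩, hC.2.isChain⟩

lemma chainUnion_subset (hC : IsSchreierChainIn S C) : chainUnion C ⊆ S := fun a ha => by
  obtain ⟨F, hF, haF⟩ := mem_chainUnion.1 ha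
  exact (hC.1 F hF).2.2 haF

lemma nodup (hC : IsSchreierChainIn S C) : C.Nodup :=
  hC.2.imp_of_mem fun hF _ h hFG => by
    obtain ⟨a, ha⟩ := (hC.1 _ hF).2.1
    exact (h a ha a (hFG ▸ ha)).false

end IsSchreierChainIn

lemma finite_setOf_isSchreierChainIn (S : Finset ℕ) : {C | IsSchreierChainIn S C}.Finite :=
  (List.finite_setOf_nodup_forall_mem S.powerset).subset fun _ hC =>
    ⟨hC.nodup, fun F hF => mem_powerset.2 (hC.1 F hF).2.2⟩

def restrictChain (S : Finset ℕ) (C : List (Finset ℕ)) : List (Finset ℕ) :=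
  (C.map (· ∩ S)).filter (·.Nonempty)

lemma isSchreierChainIn_restrictChain {S : Finset ℕ} {C : List (Finset ℕ)}
    (hC : SchreierChainList C) : IsSchreierChainIn S (restrictChain S C) := by
  refine ⟨fun G hG => ?_, ?_⟩
  · obtain ⟨hG, hGne⟩ := List.mem_filter.1 hG
    obtain ⟨F, hF, rfl⟩ := List.mem_map.1 hG
    exact ⟨(hC.1 F hF).1.mono inter_subset_left, by simpa using hGne, inter_subset_right⟩
  · refine List.Pairwise.filter _ (List.pairwise_map.2 ?_)
    refine (pairwise_precedes_of_isChain (fun F hF => (hC.1 F hF).2) hC.2).imp ?_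
    exact fun h a ha b hb => h a (mem_of_mem_inter_left ha) b (mem_of_mem_inter_left hb)

noncomputable def betaPow (p : ℝ) (x : ℕ → ℝ) (C : List (Finset ℕ)) : ℝ :=
  (C.map fun F => (∑ n ∈ F, |x n|) ^ p).sum

lemma betaPow_cons (p : ℝ) (x : ℕ → ℝ) (F : Finset ℕ) (C : List (Finset ℕ)) :
    betaPow p x (F :: C) = (∑ n ∈ F, |x n|) ^ p + betaPow p x C := List.sum_cons

lemma betaPow_nonneg (p : ℝ) (x : ℕ → ℝ) (C : List (Finset ℕ)) : 0 ≤ betaPow p x C :=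
  List.sum_nonneg fun _ h => by
    obtain ⟨F, -, rfl⟩ := List.mem_map.1 h
    positivity

lemma betaNorm_le_betaNorm {p : ℝ} (hp : 0 ≤ p) {x : ℕ → ℝ} {C D : List (Finset ℕ)}
    (h : betaPow p x C ≤ betaPow p x D) : betaNorm p x C ≤ betaNorm p x D :=
  Real.rpow_le_rpow (betaPow_nonneg p x C) h (by positivity)

lemma betaPow_restrictChain {p : ℝ} (hp : 0 < p) {x : ℕ → ℝ} {S : Finset ℕ}
    (hx : ∀ n ∉ S, x n = 0) (C : List (Finset ℕ)) :
    betaPow p x (restrictChain S C) = betaPow p x C := by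
  have hinter : ∀ F : Finset ℕ, ∑ n ∈ F ∩ S, |x n| = ∑ n ∈ F, |x n| := fun F =>
    sum_subset inter_subset_left fun n hnF hn => by
      simp [hx n fun hnS => hn (mem_inter.2 ⟨hnF, hnS⟩)]
  have hempty : ((C.map (· ∩ S)).filter (fun G => ¬ G.Nonempty) |>.map
      fun F => (∑ n ∈ F, |x n|) ^ p).sum = 0 :=
    List.sum_eq_zero fun r hr => by
      obtain ⟨G, hG, rfl⟩ := List.mem_map.1 hr
      simp [not_nonempty_iff_eq_empty.1 (by simpa using (List.mem_filter.1 hG).2),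
        Real.zero_rpow hp.ne']
  rw [betaPow, restrictChain, ← add_zero (List.sum _), ← hempty,
    List.sum_map_filter_add_sum_map_filter_not, List.map_map]
  simp only [Function.comp_def, hinter]
  rfl

lemma sum_abs_pow_le_insert_erase {p : ℝ} (hp : 0 ≤ p) {x : ℕ → ℝ} {F : Finset ℕ}
    {n M : ℕ} (hnF : n ∉ F) (hM : M ∈ F) (hx : |x M| ≤ |x n|) :
    (∑ k ∈ F, |x k|) ^ p ≤ (∑ k ∈ insert n (F.erase M), |x k|) ^ p := by
  rw [sum_insert_erase hnF hM]
  exact Real.rpow_le_rpow (by positivity) (by linarith) hp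

/-- A potential that grows when a block gains an element or trades one for a smaller one. -/
noncomputable def blockWeight (F : Finset ℕ) : ℝ := ∑ k ∈ F, ((k : ℝ) + 1)⁻¹

lemma blockWeight_pos {F : Finset ℕ} (hF : F.Nonempty) : 0 < blockWeight F :=
  sum_pos (fun _ _ => by positivity) hF

lemma blockWeight_lt_insert_erase {F : Finset ℕ} {n M : ℕ} (hnF : n ∉ F) (hM : M ∈ F)
    (hnM : n < M) : blockWeight F < blockWeight (insert n (F.erase M)) := by
  have : ((M : ℝ) + 1)⁻¹ < ((n : ℝ) + 1)⁻¹ := by gcongr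
  rw [blockWeight, blockWeight, sum_insert_erase hnF hM]
  linarith

noncomputable def chainWeight (C : List (Finset ℕ)) : ℝ := (C.map blockWeight).sum

lemma chainWeight_cons (F : Finset ℕ) (C : List (Finset ℕ)) :
    chainWeight (F :: C) = blockWeight F + chainWeight C := List.sum_cons

section Insertion

variable {p : ℝ} {x : ℕ → ℝ} {S : Finset ℕ} {n : ℕ}

lemma exists_insert_of_lt (hnS : n ∈ S) (hn0 : 0 < n) {C : List (Finset ℕ)}
    (hC : IsSchreierChainIn S C) (hlt : ∀ b ∈ chainUnion C, n < b) :
    ∃ C', IsSchreierChainIn S C' ∧ chainUnion C' ⊆ insert n (chainUnion C) ∧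
      betaPow p x C ≤ betaPow p x C' ∧ chainWeight C < chainWeight C' := by
  refine ⟨{n} :: C, hC.cons (isSchreier_singleton hn0) (singleton_nonempty n)
    (singleton_subset_iff.2 hnS) (by simpa using hlt), (insert_eq n _).ge, ?_, ?_⟩
  · rw [betaPow_cons]
    have : 0 ≤ (∑ k ∈ {n}, |x k|) ^ p := by positivity
    linarith
  · rw [chainWeight_cons]
    linarith [blockWeight_pos (singleton_nonempty n)]

lemma exists_insert_of_mem_between (hp : 0 ≤ p)
    (hanti : ∀ m ∈ S, ∀ k ∈ S, m < k → |x k| ≤ |x m|) (hnS : n ∈ S) {F : Finset ℕ}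
    {C : List (Finset ℕ)} (hC : IsSchreierChainIn S (F :: C)) (hnF : n ∉ F) {a b : ℕ}
    (ha : a ∈ F) (han : a < n) (hb : b ∈ F) (hnb : n < b) :
    ∃ C', IsSchreierChainIn S C' ∧ chainUnion C' ⊆ insert n (chainUnion (F :: C)) ∧
      betaPow p x (F :: C) ≤ betaPow p x C' ∧ chainWeight (F :: C) < chainWeight C' := by
  obtain ⟨hF, hFne, hFS⟩ := hC.head
  set M := F.max' hFne
  have hM : M ∈ F := F.max'_mem hFne
  have hnM : n < M := hnb.trans_le (F.le_max' b hb)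
  have hsub : insert n (F.erase M) ⊆ insert n F := insert_subset_insert n (erase_subset M F)
  refine ⟨insert n (F.erase M) :: C, hC.tail.cons (hF.insert_erase hM ha han.le)
    (insert_nonempty _ _) (hsub.trans (insert_subset hnS hFS)) fun c hc d hd => ?_, ?_, ?_, ?_⟩
  · rcases mem_insert.1 (hsub hc) with rfl | hc
    · exact hnb.trans (hC.head_lt b hb d hd)
    · exact hC.head_lt c hc d hd
  · rw [chainUnion_cons, chainUnion_cons, ← insert_union]
    exact union_subset_union hsub le_rfl
  · rw [betaPow_cons, betaPow_cons]
    linarith [sum_abs_pow_le_insert_erase hp (x := x) hnF hM (hanti n hnS M (hFS hM) hnM)]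
  · rw [chainWeight_cons, chainWeight_cons]
    linarith [blockWeight_lt_insert_erase hnF hM hnM]

lemma exists_insert (hp : 0 ≤ p) (hanti : ∀ m ∈ S, ∀ k ∈ S, m < k → |x k| ≤ |x m|)
    (hnS : n ∈ S) (hn0 : 0 < n) :
    ∀ C : List (Finset ℕ), IsSchreierChainIn S C → n ∉ chainUnion C →
      ∃ C', IsSchreierChainIn S C' ∧ chainUnion C' ⊆ insert n (chainUnion C) ∧
        betaPow p x C ≤ betaPow p x C' ∧ chainWeight C < chainWeight C'
  | [], hC, _ => exists_insert_of_lt hnS hn0 hC (by simp [chainUnion])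
  | F :: C, hC, hnC => by
    obtain ⟨hF, hFne, hFS⟩ := hC.head
    have hnF : n ∉ F := fun h => hnC (mem_union_left _ h)
    by_cases hbefore : ∀ b ∈ F, n < b
    · refine exists_insert_of_lt hnS hn0 hC fun b hb => ?_
      rcases mem_union.1 hb with hb | hb
      · exact hbefore b hb
      · obtain ⟨c, hc⟩ := hFne
        exact (hbefore c hc).trans (hC.head_lt c hc b hb)
    obtain ⟨a, ha, han⟩ : ∃ a ∈ F, a < n := by
      push Not at hbefore
      obtain ⟨a, ha, han⟩ := hbefore
      exact ⟨a, ha, han.lt_of_ne fun h => hnF (h ▸ ha)⟩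
    by_cases hafter : ∀ a ∈ F, a < n
    · obtain ⟨C', hC', hunion, hpow, hweight⟩ :=
        exists_insert hp hanti hnS hn0 C hC.tail fun h => hnC (mem_union_right _ h)
      refine ⟨F :: C', hC'.cons hF hFne hFS fun a ha b hb => ?_,
        (union_subset_union le_rfl hunion).trans_eq (union_insert _ _ _), ?_, ?_⟩
      · rcases mem_insert.1 (hunion hb) with rfl | hb
        · exact hafter a ha
        · exact hC.head_lt a ha b hb
      · rw [betaPow_cons, betaPow_cons]
        linarith
      · rw [chainWeight_cons, chainWeight_cons]
        linarith
    obtain ⟨b, hb, hnb⟩ : ∃ b ∈ F, n < b := by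
      push Not at hafter
      obtain ⟨b, hb, hnb⟩ := hafter
      exact ⟨b, hb, hnb.lt_of_ne fun h => hnF (h ▸ hb)⟩
    exact exists_insert_of_mem_between hp hanti hnS hC hnF ha han hb hnb

end Insertion

lemma exists_isSchreierChainIn_covering_isMax {p : ℝ} (hp : 0 ≤ p) {x : ℕ → ℝ}
    {S : Finset ℕ} (hS0 : 0 ∉ S) (hanti : ∀ m ∈ S, ∀ k ∈ S, m < k → |x k| ≤ |x m|) :
    ∃ C, IsSchreierChainIn S C ∧
      (∀ D, IsSchreierChainIn S D → betaPow p x D ≤ betaPow p x C) ∧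
      S ⊆ chainUnion C := by
  obtain ⟨C, hC, hmax⟩ := Set.exists_max_image _
    (fun C => toLex (betaPow p x C, chainWeight C)) (finite_setOf_isSchreierChainIn S)
    ⟨[], .nil⟩
  refine ⟨C, hC, fun D hD => ?_, fun n hn => ?_⟩
  · rcases Prod.Lex.le_iff.1 (hmax D hD) with h | ⟨h, -⟩
    exacts [h.le, h.le]
  · by_contra hnC
    obtain ⟨D, hD, -, hpow, hweight⟩ :=
      exists_insert hp hanti hn (Nat.pos_of_ne_zero fun h => hS0 (h ▸ hn)) C hC hnC
    rcases Prod.Lex.le_iff.1 (hmax D hD) with h | ⟨-, h⟩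
    · exact h.not_ge hpow
    · exact h.not_gt hweight

/-- A finitely supported vector with decreasing nonzero coordinates attains its
Baernstein norm at a Schreier chain covering its support. -/
theorem baernstein_norm_attained_support (p : ℝ) (hp : 1 < p) (x : ℕ → ℝ)
    (hx0 : x 0 = 0) (hfin : (Function.support x).Finite) (hxne : x ≠ 0)
    (hnn : ∀ n, 0 ≤ x n)
    (hdec : ∀ m n : ℕ, m < n → x m ≠ 0 → x n ≠ 0 → x n ≤ x m) :
    ∃ C : List (Finset ℕ), IsSchreierChain C ∧
      (↑(chainUnion C) : Set ℕ) = Function.support x ∧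
      baernsteinNorm p x = betaNorm p x C := by
  set S := hfin.toFinset with hS
  have hmemS (n : ℕ) : n ∈ S ↔ x n ≠ 0 := hfin.mem_toFinset
  have hanti : ∀ m ∈ S, ∀ k ∈ S, m < k → |x k| ≤ |x m| := fun m hm k hk hmk => by
    rw [abs_of_nonneg (hnn k), abs_of_nonneg (hnn m)]
    exact hdec m k hmk ((hmemS m).1 hm) ((hmemS k).1 hk)
  obtain ⟨C, hC, hmax, hcover⟩ :=
    exists_isSchreierChainIn_covering_isMax (p := p) (by linarith) (by simp [hmemS, hx0]) hanti
  have hunion : chainUnion C = S := hC.chainUnion_subset.antisymm hcover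
  have hCne : C ≠ [] := by
    rintro rfl
    refine hxne (funext fun n => not_not.1 fun h => ?_)
    simpa [← hunion, chainUnion] using (hmemS n).2 h
  have hCchain : IsSchreierChain C := ⟨hCne, hC.schreierChainList⟩
  refine ⟨C, hCchain, by rw [hunion, hS, Set.Finite.coe_toFinset], ?_⟩
  refine IsGreatest.csSup_eq ⟨⟨C, hCchain, rfl⟩, ?_⟩
  rintro _ ⟨D, hD, rfl⟩
  have hxS : ∀ n ∉ S, x n = 0 := fun n hn => not_not.1 fun h => hn ((hmemS n).2 h)
  calc betaNorm p x D = betaNorm p x (restrictChain S D) :=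
        congrArg (· ^ (1 / p)) (betaPow_restrictChain (by linarith) hxS D).symm
    _ ≤ betaNorm p x C :=
        betaNorm_le_betaNorm (by linarith) (hmax _ (isSchreierChainIn_restrictChain hD.2))
end

section
/- Let I be a (two-sided) ideal of a Banach algebra A and let p ∈ A be a nonzero idempotent with dist(p, I) < ‖p‖^{-2}. Then p ∈ I. -/
/-!
If `p` is idempotent and `a ∈ I` is within `‖p‖⁻²` of `p`, then `x := p - p a p = p (p - a) p` has
norm `< 1`, so `1 - x` is invertible. Since `p x = x`, we get `p (1 - x) = p a p ∈ I`, and hence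
`p = p a p (1 - x)⁻¹ ∈ I`.
-/

namespace IsIdempotentElem

section Ring

variable {R : Type*} [Ring R] {p : R}

theorem sub_mul_mul_eq_mul_sub_mul (hp : IsIdempotentElem p) (b : R) :
    p - p * b * p = p * (p - b) * p := by
  rw [mul_sub, hp.eq, sub_mul, hp.eq]

theorem mul_one_sub_sub_mul_mul (hp : IsIdempotentElem p) (b : R) :
    p * (1 - (p - p * b * p)) = p * b * p := by
  rw [mul_sub, mul_one, mul_sub, ← mul_assoc, ← mul_assoc, hp.eq, sub_sub_cancel]

end Ring

section NormedRing

variable {R : Type*} [NormedRing R] {p : R}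

theorem norm_sub_mul_mul_le (hp : IsIdempotentElem p) (b : R) :
    ‖p - p * b * p‖ ≤ ‖p‖ ^ 2 * ‖p - b‖ :=
  calc ‖p - p * b * p‖ = ‖p * (p - b) * p‖ := by rw [hp.sub_mul_mul_eq_mul_sub_mul]
    _ ≤ ‖p‖ * ‖p - b‖ * ‖p‖ := norm_mul₃_le
    _ = ‖p‖ ^ 2 * ‖p - b‖ := by ring

theorem mem_of_norm_sub_mul_mul_lt_one [HasSummableGeomSeries R] (hp : IsIdempotentElem p)
    {I : TwoSidedIdeal R} {b : R} (hb : b ∈ I) (h : ‖p - p * b * p‖ < 1) : p ∈ I := by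
  let u := Units.oneSub _ h
  have hpu : p * u = p * b * p := hp.mul_one_sub_sub_mul_mul b
  have hp_eq : p = p * b * p * ↑u⁻¹ := by rw [← hpu, mul_assoc, u.mul_inv, mul_one]
  rw [hp_eq]
  exact I.mul_mem_right _ _ (I.mul_mem_right _ _ (I.mul_mem_left _ _ hb))

end NormedRing

end IsIdempotentElem

theorem idempotent_mem_of_dist_lt_general {A : Type*} [NormedRing A] [CompleteSpace A]
    (I : TwoSidedIdeal A) (p : A) (hp : p * p = p)
    (h : Metric.infDist p (I : Set A) < (‖p‖ ^ 2)⁻¹) : p ∈ I := by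
  have hp_norm : 0 < ‖p‖ ^ 2 := inv_pos.mp (Metric.infDist_nonneg.trans_lt h)
  obtain ⟨a, haI, ha⟩ := (Metric.infDist_lt_iff ⟨0, I.zero_mem⟩).mp h
  refine IsIdempotentElem.mem_of_norm_sub_mul_mul_lt_one hp haI ?_
  calc ‖p - p * a * p‖ ≤ ‖p‖ ^ 2 * ‖p - a‖ := IsIdempotentElem.norm_sub_mul_mul_le hp a
    _ < ‖p‖ ^ 2 * (‖p‖ ^ 2)⁻¹ := by rw [← dist_eq_norm]; gcongr
    _ = 1 := mul_inv_cancel₀ hp_norm.ne'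

/-- An idempotent close enough to a two-sided ideal of a Banach algebra belongs to the ideal. -/
theorem idempotent_mem_of_dist_lt {A : Type*} [NormedRing A] [CompleteSpace A]
    (I : TwoSidedIdeal A) (p : A) (hp : p * p = p) (hp0 : p ≠ 0)
    (h : Metric.infDist p (I : Set A) < (‖p‖ ^ 2)⁻¹) : p ∈ I :=
  idempotent_mem_of_dist_lt_general I p hp h
end

section
/- For every 1 < p < ∞ and every sequence x of scalars, ‖x‖_{ℓ_p}^p ≤ K_p · ‖x‖_∞^{p−1} · ‖x‖_{S_1}, where K_p = (3·2^{p−1} − 2)/(2^{p−1} − 1). (Here the value ∞ is allowed on both sides.) -/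
open Finset Filter

open ENNReal

noncomputable def lpPow (p : ℝ) (x : ℕ → ℝ) : ℝ≥0∞ := ∑' n, ENNReal.ofReal (|x n| ^ p)

noncomputable def supNormE (x : ℕ → ℝ) : ℝ≥0∞ := ⨆ n, ENNReal.ofReal |x n|

noncomputable def s1NormE (x : ℕ → ℝ) : ℝ≥0∞ :=
  ⨆ F ∈ {F : Finset ℕ | IsSchreier F ∧ F.Nonempty}, ENNReal.ofReal (∑ n ∈ F, |x n|)

noncomputable def spNormE (p : ℝ) (x : ℕ → ℝ) : ℝ≥0∞ :=
  ⨆ F ∈ {F : Finset ℕ | IsSchreier F ∧ F.Nonempty}, ENNReal.ofReal (mu p x F)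

/-! Let `y` be the decreasing rearrangement of `|x 1|, …, |x N|`. The `2m+1` largest entries sit
at distinct positive positions, at most `m` of them `≤ m`, so the Schreier condition gives
`y m + ⋯ + y (2m) ≤ S`, where `S = ‖x‖_{S_1}`; in particular `y j ≤ S / (m+1)` for `j ≥ 2m`.
With `A = ‖x‖_∞` and `M = ⌊2S/A⌋`, the first `M` terms contribute at most `M A^p ≤ 2 A^(p-1) S`,
and the `k`-th dyadic block `[(M+1)2^k - 1, (M+1)2^(k+1) - 1)` is one of the blocks above, on
which `y ≤ A / 2^k`; so it contributes at most `(A / 2^k)^(p-1) S`. Summing the geometric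
series gives the constant `2 + (1 - 2^(1-p))⁻¹ = K_p`. -/

lemma rpow_le_rpow_sub_one_mul {a d p : ℝ} (ha : 0 ≤ a) (had : a ≤ d) (hp : 1 ≤ p) :
    a ^ p ≤ d ^ (p - 1) * a := by
  rcases ha.eq_or_lt with rfl | ha
  · simp [Real.zero_rpow (by linarith : p ≠ 0)]
  calc a ^ p = a ^ (p - 1) * a := by rw [← Real.rpow_add_one ha.ne']; ring_nf
    _ ≤ d ^ (p - 1) * a := by gcongr

lemma two_add_inv_one_sub_inv {R : ℝ} (hR : 1 < R) :
    2 + (1 - R⁻¹)⁻¹ = (3 * R - 2) / (R - 1) := by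
  have : R - 1 ≠ 0 := by linarith
  field_simp
  ring

lemma Antitone.sum_Ico_le_sum {β : Type*} [AddCommMonoid β] [PartialOrder β]
    [IsOrderedAddMonoid β] {y : ℕ → β} (hy : Antitone y) {Q : Finset ℕ} {t : ℕ}
    (hQ : Q ⊆ range t) : ∑ j ∈ Ico (t - #Q) t, y j ≤ ∑ j ∈ Q, y j := by
  set I := Ico (t - #Q) t
  have hQt : #Q ≤ t := by simpa using card_le_card hQ
  have hcard : #(I \ Q) = #(Q \ I) := by
    have hI : #I = #Q := by simp only [I, Nat.card_Ico]; omega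
    have := card_sdiff_add_card_inter I Q
    have := card_sdiff_add_card_inter Q I
    rw [inter_comm] at this
    omega
  have below : ∀ j ∈ I \ Q, y j ≤ y (t - #Q) := fun j hj =>
    hy (mem_Ico.mp (mem_sdiff.mp hj).1).1
  have above : ∀ j ∈ Q \ I, y (t - #Q) ≤ y j := by
    intro j hj
    obtain ⟨hjQ, hjI⟩ := mem_sdiff.mp hj
    have := mem_range.mp (hQ hjQ)
    exact hy (by simp only [I, mem_Ico] at hjI; omega)
  calc ∑ j ∈ I, y j = ∑ j ∈ I ∩ Q, y j + ∑ j ∈ I \ Q, y j :=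
        (sum_inter_add_sum_sdiff I Q y).symm
    _ ≤ ∑ j ∈ I ∩ Q, y j + #(I \ Q) • y (t - #Q) := by grw [sum_le_card_nsmul _ _ _ below]
    _ ≤ ∑ j ∈ Q ∩ I, y j + ∑ j ∈ Q \ I, y j := by
        rw [inter_comm, hcard]; grw [card_nsmul_le_sum _ _ _ above]
    _ = ∑ j ∈ Q, y j := sum_inter_add_sum_sdiff Q I y

section Antitone

variable {y : ℕ → ℝ} {S A p : ℝ}

lemma Antitone.le_div_of_sum_Ico_le (hy : Antitone y)
    (hS : ∀ m, ∑ j ∈ Ico m (2 * m + 1), y j ≤ S) {m j : ℕ} (hj : 2 * m ≤ j) :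
    y j ≤ S / (m + 1) := by
  rw [le_div_iff₀ (by positivity), mul_comm]
  calc (m + 1 : ℝ) * y j = ∑ _i ∈ Ico m (2 * m + 1), y j := by
        rw [sum_const, Nat.card_Ico, show 2 * m + 1 - m = m + 1 by omega, nsmul_eq_mul]
        push_cast
        ring
    _ ≤ ∑ i ∈ Ico m (2 * m + 1), y i :=
        sum_le_sum fun i hi => hy (by simp only [mem_Ico] at hi; omega)
    _ ≤ S := hS m

lemma Antitone.le_div_two_pow (hy : Antitone y) (hS : ∀ m, ∑ j ∈ Ico m (2 * m + 1), y j ≤ S)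
    (hyA : ∀ j, y j ≤ A) {M : ℕ} (hM : 2 * S ≤ A * (M + 1)) (K : ℕ) :
    y ((M + 1) * 2 ^ K - 1) ≤ A / 2 ^ K := by
  cases K with
  | zero => simpa using hyA _
  | succ K =>
    have hm : 1 ≤ (M + 1) * 2 ^ K := Nat.one_le_iff_ne_zero.mpr (by positivity)
    have h2 : (M + 1) * 2 ^ (K + 1) = 2 * ((M + 1) * 2 ^ K) := by ring
    calc y ((M + 1) * 2 ^ (K + 1) - 1) ≤ S / (((M + 1) * 2 ^ K - 1 : ℕ) + 1) :=
          hy.le_div_of_sum_Ico_le hS (by omega)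
      _ = S / ((M + 1) * 2 ^ K) := by rw [Nat.cast_sub hm]; push_cast; ring_nf
      _ ≤ A / 2 ^ (K + 1) := by
          rw [div_le_div_iff₀ (by positivity) (by positivity), pow_succ]
          nlinarith [pow_pos (two_pos : (0 : ℝ) < 2) K]

lemma sum_Ico_rpow_le (hy0 : ∀ j, 0 ≤ y j) (hy : Antitone y)
    (hS : ∀ m, ∑ j ∈ Ico m (2 * m + 1), y j ≤ S) (hp : 1 ≤ p) (m : ℕ) :
    ∑ j ∈ Ico m (2 * m + 1), y j ^ p ≤ y m ^ (p - 1) * S :=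
  calc ∑ j ∈ Ico m (2 * m + 1), y j ^ p ≤ ∑ j ∈ Ico m (2 * m + 1), y m ^ (p - 1) * y j :=
        sum_le_sum fun j hj => rpow_le_rpow_sub_one_mul (hy0 j) (hy (mem_Ico.1 hj).1) hp
    _ = y m ^ (p - 1) * ∑ j ∈ Ico m (2 * m + 1), y j := (mul_sum ..).symm
    _ ≤ y m ^ (p - 1) * S := by have := hy0 m; gcongr; exact hS m

lemma sum_range_rpow_le_geom (hy0 : ∀ j, 0 ≤ y j) (hy : Antitone y)
    (hS : ∀ m, ∑ j ∈ Ico m (2 * m + 1), y j ≤ S) (hp : 1 < p) (hA : 0 < A)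
    (hyA : ∀ j, y j ≤ A) {M : ℕ} (hM₁ : M * A ≤ 2 * S) (hM₂ : 2 * S ≤ A * (M + 1)) (K : ℕ) :
    ∑ j ∈ range ((M + 1) * 2 ^ K - 1), y j ^ p ≤
      (2 + ∑ k ∈ range K, ((2 : ℝ) ^ (p - 1))⁻¹ ^ k) * (A ^ (p - 1) * S) := by
  induction K with
  | zero =>
    calc ∑ j ∈ range ((M + 1) * 2 ^ 0 - 1), y j ^ p ≤ ∑ _j ∈ range M, A ^ p := by
          simp only [pow_zero, mul_one, add_tsub_cancel_right]
          exact sum_le_sum fun j _ => Real.rpow_le_rpow (hy0 j) (hyA j) (by linarith)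
      _ = M * A * A ^ (p - 1) := by
          rw [sum_const, card_range, nsmul_eq_mul, mul_assoc, ← Real.rpow_one_add' hA.le]
          · ring_nf
          · linarith
      _ ≤ 2 * S * A ^ (p - 1) := by gcongr
      _ = _ := by simp only [range_zero, sum_empty, add_zero]; ring
  | succ K ih =>
    set b := (M + 1) * 2 ^ K - 1
    have hb : (M + 1) * 2 ^ (K + 1) - 1 = 2 * b + 1 := by
      have : 1 ≤ (M + 1) * 2 ^ K := Nat.one_le_iff_ne_zero.mpr (by positivity)
      have h2 : (M + 1) * 2 ^ (K + 1) = 2 * ((M + 1) * 2 ^ K) := by ring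
      omega
    have hdecay : y b ^ (p - 1) ≤ ((2 : ℝ) ^ (p - 1))⁻¹ ^ K * A ^ (p - 1) := by
      calc y b ^ (p - 1) ≤ (A / 2 ^ K) ^ (p - 1) :=
            Real.rpow_le_rpow (hy0 b) (hy.le_div_two_pow hS hyA hM₂ K) (by linarith)
        _ = _ := by
            rw [Real.div_rpow hA.le (by positivity), ← Real.rpow_pow_comm (by norm_num), inv_pow,
              div_eq_inv_mul]
    rw [hb, ← sum_range_add_sum_Ico _ (show b ≤ 2 * b + 1 by omega), sum_range_succ]
    grw [ih, sum_Ico_rpow_le hy0 hy hS hp.le b, hdecay]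
    · apply le_of_eq; ring
    · exact (hy0 0).trans (by simpa using hS 0)

theorem Antitone.sum_range_rpow_le (hy0 : ∀ j, 0 ≤ y j) (hy : Antitone y)
    (hS : ∀ m, ∑ j ∈ Ico m (2 * m + 1), y j ≤ S) (hp : 1 < p) (hA : 0 < A)
    (hyA : ∀ j, y j ≤ A) (N : ℕ) :
    ∑ j ∈ range N, y j ^ p ≤
      (3 * (2 : ℝ) ^ (p - 1) - 2) / ((2 : ℝ) ^ (p - 1) - 1) * A ^ (p - 1) * S := by
  have hS0 : 0 ≤ S := (hy0 0).trans (by simpa using hS 0)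
  have hR : 1 < (2 : ℝ) ^ (p - 1) := Real.one_lt_rpow one_lt_two (by linarith)
  set r := ((2 : ℝ) ^ (p - 1))⁻¹
  set M := ⌊2 * S / A⌋₊
  have hM₁ : M * A ≤ 2 * S := (le_div_iff₀ hA).mp (Nat.floor_le (by positivity))
  have hM₂ : 2 * S ≤ A * (M + 1) := by
    have := Nat.lt_floor_add_one (2 * S / A)
    rw [div_lt_iff₀ hA] at this
    linarith
  have hN : N ≤ (M + 1) * 2 ^ N - 1 := by
    have : N < 2 ^ N := Nat.lt_two_pow_self
    have : 2 ^ N ≤ (M + 1) * 2 ^ N := Nat.le_mul_of_pos_left _ M.succ_pos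
    omega
  have hgeom : ∑ k ∈ range N, r ^ k ≤ (1 - r)⁻¹ := by
    simpa only [range_eq_Ico, pow_zero, one_div] using
      geom_sum_Ico_le_of_lt_one (m := 0) (n := N) (by positivity) (inv_lt_one_of_one_lt₀ hR)
  calc ∑ j ∈ range N, y j ^ p ≤ ∑ j ∈ range ((M + 1) * 2 ^ N - 1), y j ^ p :=
        sum_le_sum_of_subset_of_nonneg (range_subset_range.mpr hN)
          fun j _ _ => Real.rpow_nonneg (hy0 j) p
    _ ≤ (2 + ∑ k ∈ range N, r ^ k) * (A ^ (p - 1) * S) :=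
        sum_range_rpow_le_geom hy0 hy hS hp hA hyA hM₁ hM₂ N
    _ ≤ (2 + (1 - r)⁻¹) * (A ^ (p - 1) * S) := by gcongr
    _ = _ := by rw [two_add_inv_one_sub_inv hR, mul_assoc]

end Antitone

section Rearrangement

variable (x : ℕ → ℝ) (N : ℕ)

noncomputable def rankedPos (i : Fin N) : ℕ :=
  (Tuple.sort (fun k : Fin N => OrderDual.toDual |x ((k : ℕ) + 1)|) i : ℕ) + 1

lemma rankedPos_injective : (rankedPos x N).Injective := fun _ _ h =>
  (Tuple.sort _).injective (Fin.ext (Nat.succ_injective h))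

lemma antitone_abs_rankedPos : Antitone fun i => |x (rankedPos x N i)| :=
  monotone_toDual_comp_iff.mp
    (Tuple.monotone_sort fun k : Fin N => OrderDual.toDual |x ((k : ℕ) + 1)|)

/-- `decRearr x N j` is the `(j + 1)`-st largest of `|x 1|, …, |x N|`, and `0` for `j ≥ N`. -/
noncomputable def decRearr (j : ℕ) : ℝ :=
  if h : j < N then |x (rankedPos x N ⟨j, h⟩)| else 0

variable {x N} in
lemma decRearr_of_lt {j : ℕ} (h : j < N) : decRearr x N j = |x (rankedPos x N ⟨j, h⟩)| :=
  dif_pos h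

variable {x N} in
lemma decRearr_of_le {j : ℕ} (h : N ≤ j) : decRearr x N j = 0 :=
  dif_neg (by omega)

lemma decRearr_nonneg (j : ℕ) : 0 ≤ decRearr x N j := by
  unfold decRearr; split_ifs <;> positivity

lemma decRearr_antitone : Antitone (decRearr x N) := by
  intro i j hij
  by_cases hj : j < N
  · rw [decRearr_of_lt (hij.trans_lt hj), decRearr_of_lt hj]
    exact antitone_abs_rankedPos x N (show (⟨i, _⟩ : Fin N) ≤ ⟨j, hj⟩ from hij)
  · rw [decRearr_of_le (not_lt.mp hj)]
    exact decRearr_nonneg x N i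

lemma decRearr_le {A : ℝ} (hA₀ : 0 ≤ A) (hA : ∀ n, |x n| ≤ A) (j : ℕ) :
    decRearr x N j ≤ A := by
  unfold decRearr; split_ifs
  exacts [hA _, hA₀]

lemma sum_range_decRearr_rpow (q : ℝ) :
    ∑ j ∈ range N, decRearr x N j ^ q = ∑ n ∈ range N, |x (n + 1)| ^ q := by
  rw [← Fin.sum_univ_eq_sum_range (decRearr x N · ^ q),
    ← Fin.sum_univ_eq_sum_range (fun n => |x (n + 1)| ^ q), ← Equiv.sum_comp
    (Tuple.sort fun k : Fin N => OrderDual.toDual |x ((k : ℕ) + 1)|)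
    (fun i : Fin N => |x ((i : ℕ) + 1)| ^ q)]
  exact sum_congr rfl fun i _ => by rw [decRearr_of_lt i.2]; rfl

lemma sum_Ico_decRearr_le {S : ℝ} (hS : ∀ F, IsSchreier F → ∑ n ∈ F, |x n| ≤ S) (m : ℕ) :
    ∑ j ∈ Ico m (2 * m + 1), decRearr x N j ≤ S := by
  set T : Finset (Fin N) := {i | (i : ℕ) < 2 * m + 1}
  have hT : #T = min N (2 * m + 1) := Fin.card_filter_val_lt
  have hsmall : #{i ∈ T | rankedPos x N i ≤ m} ≤ m := by
    simpa using card_le_card_of_injOn (rankedPos x N) (t := Icc 1 m)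
      (fun i hi => mem_Icc.mpr ⟨Nat.le_add_left _ _, (mem_filter.mp hi).2⟩)
      (rankedPos_injective x N).injOn
  obtain ⟨Q, hQ, hQcard⟩ : ∃ Q ⊆ {i ∈ T | m < rankedPos x N i}, #Q = #T - m := by
    apply exists_subset_card_eq
    have := card_filter_add_card_filter_not (s := T) (fun i => m < rankedPos x N i)
    simp only [not_lt] at this
    omega
  set F := Q.map ⟨rankedPos x N, rankedPos_injective x N⟩
  have hF : IsSchreier F := fun hne => by
    refine le_min' _ _ _ fun n hn => ?_
    obtain ⟨i, hi, rfl⟩ := mem_map.mp hn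
    have := (mem_filter.mp (hQ hi)).2
    rw [card_map, hQcard]
    simp only [Function.Embedding.coeFn_mk]
    omega
  have hQT : Q.map Fin.valEmbedding ⊆ range #T := by
    intro j hj
    obtain ⟨i, hi, rfl⟩ := mem_map.mp hj
    have := (mem_filter.mp (hQ hi)).1
    simp only [T, mem_filter, mem_univ, true_and] at this
    simp only [Fin.valEmbedding_apply, mem_range, hT]
    omega
  have hIco : Ico m #T = Ico (#T - #(Q.map Fin.valEmbedding)) #T := by
    rw [card_map, hQcard]
    ext j
    simp only [mem_Ico]
    omega
  calc ∑ j ∈ Ico m (2 * m + 1), decRearr x N j = ∑ j ∈ Ico m #T, decRearr x N j := by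
        refine (sum_subset (Ico_subset_Ico_right (by omega)) fun j hj hj' => ?_).symm
        simp only [mem_Ico] at hj hj'
        exact decRearr_of_le (by omega)
    _ ≤ ∑ j ∈ Q.map Fin.valEmbedding, decRearr x N j :=
        hIco ▸ (decRearr_antitone x N).sum_Ico_le_sum hQT
    _ = ∑ n ∈ F, |x n| := by
        rw [sum_map, sum_map]
        exact sum_congr rfl fun i _ => decRearr_of_lt i.2
    _ ≤ S := hS F hF

end Rearrangement

theorem sum_range_rpow_abs_le {p A S : ℝ} (hp : 1 < p) {x : ℕ → ℝ} (hx0 : x 0 = 0)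
    (hA : 0 < A) (hxA : ∀ n, |x n| ≤ A) (hS : ∀ F, IsSchreier F → ∑ n ∈ F, |x n| ≤ S)
    (N : ℕ) :
    ∑ n ∈ range N, |x n| ^ p ≤
      (3 * (2 : ℝ) ^ (p - 1) - 2) / ((2 : ℝ) ^ (p - 1) - 1) * A ^ (p - 1) * S :=
  calc ∑ n ∈ range N, |x n| ^ p ≤ ∑ n ∈ range (N + 1), |x n| ^ p :=
        sum_le_sum_of_subset_of_nonneg (range_subset_range.mpr N.le_succ)
          fun _ _ _ => by positivity
    _ = ∑ j ∈ range N, decRearr x N j ^ p := by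
        rw [sum_range_succ', hx0, abs_zero, Real.zero_rpow (by linarith), add_zero,
          sum_range_decRearr_rpow]
    _ ≤ _ := (decRearr_antitone x N).sum_range_rpow_le (decRearr_nonneg x N)
        (sum_Ico_decRearr_le x N hS) hp hA (decRearr_le x N hA.le hxA) N

section ExtendedNorms

variable {x : ℕ → ℝ}

lemma abs_le_toReal_supNormE (h : supNormE x ≠ ⊤) (n : ℕ) : |x n| ≤ (supNormE x).toReal :=
  (ENNReal.ofReal_le_iff_le_toReal h).mp (le_iSup (fun n => ENNReal.ofReal |x n|) n)

lemma sum_le_toReal_s1NormE (h : s1NormE x ≠ ⊤) {F : Finset ℕ} (hF : IsSchreier F) :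
    ∑ n ∈ F, |x n| ≤ (s1NormE x).toReal := by
  rcases F.eq_empty_or_nonempty with rfl | hne
  · simp
  · exact (ENNReal.ofReal_le_iff_le_toReal h).mp
      (le_iSup₂ (f := fun F (_ : F ∈ {F : Finset ℕ | IsSchreier F ∧ F.Nonempty}) =>
        ENNReal.ofReal (∑ n ∈ F, |x n|)) F ⟨hF, hne⟩)

lemma supNormE_le_s1NormE (hx0 : x 0 = 0) : supNormE x ≤ s1NormE x := by
  refine iSup_le fun n => ?_
  cases n with
  | zero => simp [hx0]
  | succ n =>
    have hF : IsSchreier {n + 1} := fun _ => by simp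
    exact le_iSup₂_of_le (f := fun F (_ : F ∈ {F : Finset ℕ | IsSchreier F ∧ F.Nonempty}) =>
      ENNReal.ofReal (∑ n ∈ F, |x n|)) {n + 1} ⟨hF, singleton_nonempty _⟩ (by simp)

lemma lpPow_eq_zero_of_supNormE_eq_zero {p : ℝ} (hp : 0 < p) (h : supNormE x = 0) :
    lpPow p x = 0 := by
  refine ENNReal.tsum_eq_zero.mpr fun n => ?_
  have hn := abs_le_toReal_supNormE (x := x) (by simp [h]) n
  rw [h, ENNReal.toReal_zero] at hn
  simp [le_antisymm hn (abs_nonneg _), Real.zero_rpow hp.ne']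

end ExtendedNorms

/-- Jameson's inequality relating the ℓ_p-, sup- and first Schreier norms,
with K_p = (3·2^(p-1) - 2)/(2^(p-1) - 1); the value ∞ is allowed on both sides. -/
theorem jameson_inequality (p : ℝ) (hp : 1 < p) (x : ℕ → ℝ) (hx0 : x 0 = 0) :
    lpPow p x ≤
      ENNReal.ofReal ((3 * (2 : ℝ) ^ (p - 1) - 2) / ((2 : ℝ) ^ (p - 1) - 1)) *
        supNormE x ^ (p - 1) * s1NormE x := by
  have hR : 1 < (2 : ℝ) ^ (p - 1) := Real.one_lt_rpow one_lt_two (by linarith)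
  have hK : 0 < (3 * (2 : ℝ) ^ (p - 1) - 2) / ((2 : ℝ) ^ (p - 1) - 1) :=
    div_pos (by linarith) (by linarith)
  rcases eq_or_ne (supNormE x) 0 with hA₀ | hA₀
  · rw [lpPow_eq_zero_of_supNormE_eq_zero (by linarith) hA₀]
    exact zero_le
  rcases eq_or_ne (s1NormE x) ⊤ with hS | hS
  · rw [hS, ENNReal.mul_top (mul_ne_zero (ENNReal.ofReal_pos.mpr hK).ne' ?_)]
    · exact le_top
    · simp [ENNReal.rpow_eq_zero_iff, hA₀, hp.le]
  have hA : supNormE x ≠ ⊤ := ne_top_of_le_ne_top hS (supNormE_le_s1NormE hx0)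
  refine ENNReal.tsum_le_of_sum_range_le fun N => ?_
  rw [← ENNReal.ofReal_sum_of_nonneg fun n _ => by positivity,
    ← ENNReal.ofReal_toReal hA, ← ENNReal.ofReal_toReal hS,
    ENNReal.ofReal_rpow_of_pos (ENNReal.toReal_pos hA₀ hA), ← ENNReal.ofReal_mul hK.le,
    ← ENNReal.ofReal_mul (by positivity)]
  exact ENNReal.ofReal_le_ofReal <| sum_range_rpow_abs_le hp hx0 (ENNReal.toReal_pos hA₀ hA)
    (abs_le_toReal_supNormE hA) (fun F hF => sum_le_toReal_s1NormE hS hF) N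
end

section
/- The constant K_p = (3·2^{p−1} − 2)/(2^{p−1} − 1) in Jameson's inequality cannot be improved below (2^p − 1)/(2^{p−1} − 1): for every ε > 0 there exists a sequence x with ‖x‖_{S_1} = 1, ‖x‖_∞ > 0, and ‖x‖_{ℓ_p}^p > ((2^p − 1)/(2^{p−1} − 1) − ε) ‖x‖_∞^{p−1}. Concretely, for each k ∈ ℕ the sequence x with x(j) = 2^{−k} for 1 ≤ j < 2^{k+1} and x(j) = 2^{−n} for 2^n ≤ j < 2^{n+1}, n > k, satisfies ‖x‖_{S_1} = 1, ‖x‖_∞ = 2^{−k}, and ‖x‖_{ℓ_p}^p / ‖x‖_∞^{p−1} = 2 − 2^{−k} + 1/(2^{p−1}−1). -/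
open Finset Filter

open ENNReal

/-- The explicit sequence witnessing optimality of Jameson's constant:
x(j) = 2^(-k) for 1 ≤ j < 2^(k+1) and x(j) = 2^(-n) for 2^n ≤ j < 2^(n+1), n > k. -/
noncomputable def jamesonSeq (k : ℕ) : ℕ → ℝ :=
  fun j => if j = 0 then 0 else ((2 : ℝ) ^ (max k (Nat.log 2 j)))⁻¹


/-!
On a dyadic block `[2^n, 2^(n+1))` with `n ≥ k` the sequence is constant `2^(-n)`, so the block,
itself a Schreier set, sums to `1`. Conversely, a Schreier set with minimum `m` has at most `m`
elements, on which the (nonincreasing) sequence is at most `2^(-N)` below `2^(N+1)` and at most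
half of that beyond, where `N = max k (log₂ m)`; counting the two levels bounds its sum by `1`.
The `ℓ_p` sum, taken block by block, is a finite geometric sum followed by a geometric series of
ratio `2^(1-p)`.
-/

theorem ENNReal.tsum_eq_add_tsum_sum_Ico_two_pow (f : ℕ → ℝ≥0∞) :
    ∑' j, f j = f 0 + ∑' n, ∑ j ∈ Ico (2 ^ n) (2 ^ (n + 1)), f j := by
  have partial_sum (N : ℕ) : ∑ j ∈ range (2 ^ N), f j
      = f 0 + ∑ n ∈ range N, ∑ j ∈ Ico (2 ^ n) (2 ^ (n + 1)), f j := by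
    induction N with
    | zero => simp
    | succ N ih =>
      rw [← sum_range_add_sum_Ico f (Nat.pow_le_pow_right two_pos N.le_succ), ih,
        sum_range_succ, add_assoc]
  rw [ENNReal.tsum_eq_iSup_nat' (tendsto_pow_atTop_atTop_of_one_lt Nat.one_lt_two),
    ENNReal.tsum_eq_iSup_nat, ENNReal.add_iSup]
  simp only [partial_sum]

theorem isSchreier_Ico {a b : ℕ} (h : b ≤ 2 * a) : IsSchreier (Ico a b) := fun hne => by
  rw [Nat.card_Ico]
  exact (Nat.sub_le_of_le_add (by omega)).trans (le_min' _ _ _ fun j hj => (mem_Ico.mp hj).1)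

theorem Finset.sum_le_of_two_level_bound {F : Finset ℕ} {x : ℕ → ℝ} {a M : ℕ} {c : ℝ}
    (hc : 0 ≤ c) (haM : a ≤ M) (hcard : #F ≤ a) (hmin : ∀ j ∈ F, a ≤ j)
    (hlow : ∀ j ∈ F, x j ≤ 2 * c) (hhigh : ∀ j ∈ F, M ≤ j → x j ≤ c) :
    ∑ j ∈ F, x j ≤ M * c := by
  set F₁ := F.filter (· < M)
  set F₂ := F.filter (¬ · < M)
  have hsplit : #F₁ + #F₂ = #F := card_filter_add_card_filter_not _
  have hF₁ : #F₁ ≤ M - a := by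
    simpa using card_le_card (s := F₁) (t := Ico a M) fun j hj => by
      rw [mem_filter] at hj
      exact mem_Ico.mpr ⟨hmin j hj.1, hj.2⟩
  have hcount : (2 * #F₁ + #F₂ : ℝ) ≤ M := by exact_mod_cast (by omega : 2 * #F₁ + #F₂ ≤ M)
  calc ∑ j ∈ F, x j = ∑ j ∈ F₁, x j + ∑ j ∈ F₂, x j := (sum_filter_add_sum_filter_not _ _ _).symm
    _ ≤ ∑ _j ∈ F₁, 2 * c + ∑ _j ∈ F₂, c := by
      gcongr with j hj j hj
      · exact hlow j (mem_filter.mp hj).1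
      · exact hhigh j (mem_filter.mp hj).1 (not_lt.mp (mem_filter.mp hj).2)
    _ = (2 * #F₁ + #F₂) * c := by simp only [sum_const, nsmul_eq_mul]; ring
    _ ≤ M * c := by gcongr

theorem inv_two_pow_rpow (n : ℕ) (q : ℝ) : ((2 : ℝ) ^ n)⁻¹ ^ q = ((2 : ℝ) ^ q)⁻¹ ^ n := by
  rw [Real.inv_rpow (by positivity), ← Real.rpow_natCast_mul zero_le_two, mul_comm,
    Real.rpow_mul_natCast zero_le_two, inv_pow]

theorem two_sub_inv_two_pow_add_one_div_pos {D : ℝ} (hD : 1 < D) (k : ℕ) :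
    0 < 2 - ((2 : ℝ) ^ k)⁻¹ + 1 / (D - 1) := by
  have : ((2 : ℝ) ^ k)⁻¹ ≤ 1 := inv_le_one_of_one_le₀ (one_le_pow₀ one_le_two)
  have : 0 < 1 / (D - 1) := one_div_pos.mpr (sub_pos.mpr hD)
  linarith

theorem hasSum_two_pow_mul_pow_max {D : ℝ} (hD : 1 < D) (k : ℕ) :
    HasSum (fun n => 2 ^ n * (2 * D)⁻¹ ^ max k n) ((2 - (2 ^ k)⁻¹ + 1 / (D - 1)) * D⁻¹ ^ k) := by
  have hD0 : D ≠ 0 := by positivity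
  have head : ∑ n ∈ range (k + 1), 2 ^ n * (2 * D)⁻¹ ^ max k n
      = (2 ^ (k + 1) - 1) * (2 * D)⁻¹ ^ k := by
    rw [sum_congr rfl fun n hn => by rw [max_eq_left (Nat.lt_succ_iff.mp (mem_range.mp hn))],
      ← sum_mul, geom_sum_eq (by norm_num)]
    norm_num
  have tail : HasSum (fun n => 2 ^ (n + (k + 1)) * (2 * D)⁻¹ ^ max k (n + (k + 1)))
      (D⁻¹ ^ (k + 1) * (1 - D⁻¹)⁻¹) := by
    refine ((hasSum_geometric_of_lt_one (by positivity) (inv_lt_one_of_one_lt₀ hD)).mul_left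
      (D⁻¹ ^ (k + 1))).congr_fun fun n => ?_
    rw [max_eq_right (by omega), ← mul_pow, mul_inv, ← mul_assoc, mul_inv_cancel₀ two_ne_zero,
      one_mul, pow_add, mul_comm]
  have hD1 : D - 1 ≠ 0 := sub_ne_zero.mpr hD.ne'
  have value : D⁻¹ ^ (k + 1) * (1 - D⁻¹)⁻¹
      = (2 - (2 ^ k)⁻¹ + 1 / (D - 1)) * D⁻¹ ^ k - (2 ^ (k + 1) - 1) * (2 * D)⁻¹ ^ k := by
    simp only [mul_inv, mul_pow, pow_succ, inv_pow]
    field_simp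
    ring
  rw [value, ← head] at tail
  exact (hasSum_nat_add_iff' (k + 1)).mp tail

section jamesonSeq

variable {k : ℕ}

theorem jamesonSeq_zero : jamesonSeq k 0 = 0 := if_pos rfl

theorem jamesonSeq_nonneg (j : ℕ) : 0 ≤ jamesonSeq k j := by
  unfold jamesonSeq; split <;> positivity

theorem jamesonSeq_of_mem_Ico {n j : ℕ} (h : j ∈ Ico (2 ^ n) (2 ^ (n + 1))) :
    jamesonSeq k j = ((2 : ℝ) ^ max k n)⁻¹ := by
  obtain ⟨hlo, hhi⟩ := mem_Ico.mp h
  rw [jamesonSeq, if_neg ((Nat.two_pow_pos n).trans_le hlo).ne',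
    Nat.log_eq_of_pow_le_of_lt_pow hlo hhi]

theorem abs_jamesonSeq (j : ℕ) : |jamesonSeq k j| = jamesonSeq k j :=
  abs_of_nonneg (jamesonSeq_nonneg j)

theorem jamesonSeq_antitoneOn : AntitoneOn (jamesonSeq k) (Set.Ici 1) := fun i hi j _ hij => by
  rw [Set.mem_Ici] at hi
  rw [jamesonSeq, jamesonSeq, if_neg (by omega), if_neg (by omega)]
  gcongr
  norm_num

theorem jamesonSeq_one : jamesonSeq k 1 = ((2 : ℝ) ^ k)⁻¹ := by
  rw [jamesonSeq_of_mem_Ico (n := 0) (by simp), Nat.max_zero]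

theorem jamesonSeq_le (j : ℕ) : jamesonSeq k j ≤ ((2 : ℝ) ^ k)⁻¹ := by
  rcases Nat.eq_zero_or_pos j with rfl | hj
  · rw [jamesonSeq_zero]; positivity
  · exact jamesonSeq_one (k := k) ▸ jamesonSeq_antitoneOn Set.self_mem_Ici hj hj

theorem sum_Ico_two_pow_jamesonSeq {M : Type*} [AddCommMonoid M] (f : ℝ → M) (n : ℕ) :
    ∑ j ∈ Ico (2 ^ n) (2 ^ (n + 1)), f (jamesonSeq k j) = 2 ^ n • f ((2 ^ max k n)⁻¹) := by
  rw [sum_congr rfl fun j hj => by rw [jamesonSeq_of_mem_Ico hj], sum_const, Nat.card_Ico,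
    pow_succ, Nat.mul_two, Nat.add_sub_cancel]

theorem sum_jamesonSeq_le_one {F : Finset ℕ} (hF : IsSchreier F) (hne : F.Nonempty) :
    ∑ j ∈ F, jamesonSeq k j ≤ 1 := by
  set m := F.min' hne
  set N := max k (Nat.log 2 m)
  have hm : 1 ≤ m := (card_pos.mpr hne).trans_le (hF hne)
  have hmN : m < 2 ^ (N + 1) := (Nat.lt_pow_succ_log_self one_lt_two m).trans_le
    (Nat.pow_le_pow_right two_pos (Nat.succ_le_succ (le_max_right _ _)))
  have hxm : jamesonSeq k m = 2 * ((2 : ℝ) ^ (N + 1))⁻¹ := by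
    rw [jamesonSeq, if_neg (by omega), pow_succ]; field_simp; rfl
  have hxM : jamesonSeq k (2 ^ (N + 1)) = ((2 : ℝ) ^ (N + 1))⁻¹ := by
    rw [jamesonSeq_of_mem_Ico (n := N + 1) (by simp [pow_succ]), max_eq_right (by omega)]
  calc ∑ j ∈ F, jamesonSeq k j ≤ (2 ^ (N + 1) : ℕ) * ((2 : ℝ) ^ (N + 1))⁻¹ :=
        sum_le_of_two_level_bound (by positivity) hmN.le (hF hne) (fun j hj => min'_le F j hj)
          (fun j hj => hxm ▸
            jamesonSeq_antitoneOn hm (hm.trans (min'_le F j hj)) (min'_le F j hj))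
          (fun j _ hj => hxM ▸ jamesonSeq_antitoneOn Nat.one_le_two_pow
            (Nat.one_le_two_pow.trans hj) hj)
    _ = 1 := by push_cast; exact mul_inv_cancel₀ (by positivity)

end jamesonSeq

theorem s1NormE_jamesonSeq (k : ℕ) : s1NormE (jamesonSeq k) = 1 := by
  simp only [s1NormE, abs_jamesonSeq]
  refine le_antisymm (iSup₂_le fun F ⟨hF, hne⟩ =>
    ENNReal.ofReal_le_one.mpr (sum_jamesonSeq_le_one hF hne)) ?_
  have hblock : ∑ j ∈ Ico (2 ^ k) (2 ^ (k + 1)), jamesonSeq k j = 1 := by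
    refine (sum_Ico_two_pow_jamesonSeq id k).trans ?_
    rw [max_self, nsmul_eq_mul, id, Nat.cast_pow, Nat.cast_ofNat]
    exact mul_inv_cancel₀ (by positivity)
  have hschreier : IsSchreier (Ico (2 ^ k) (2 ^ (k + 1))) :=
    isSchreier_Ico (by rw [pow_succ, mul_comm])
  have hne : (Ico (2 ^ k) (2 ^ (k + 1))).Nonempty :=
    nonempty_Ico.mpr (Nat.pow_lt_pow_right one_lt_two k.lt_succ_self)
  calc (1 : ℝ≥0∞) = ENNReal.ofReal (∑ j ∈ Ico (2 ^ k) (2 ^ (k + 1)), jamesonSeq k j) := by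
        rw [hblock, ENNReal.ofReal_one]
    _ ≤ _ := le_iSup₂ (f := fun F _ => ENNReal.ofReal (∑ j ∈ F, jamesonSeq k j)) _ ⟨hschreier, hne⟩

theorem supNormE_jamesonSeq (k : ℕ) :
    supNormE (jamesonSeq k) = ENNReal.ofReal (((2 : ℝ) ^ k)⁻¹) := by
  simp only [supNormE, abs_jamesonSeq]
  exact le_antisymm (iSup_le fun j => ENNReal.ofReal_le_ofReal (jamesonSeq_le j))
    (jamesonSeq_one (k := k) ▸ le_iSup (fun j => ENNReal.ofReal (jamesonSeq k j)) 1)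

theorem lpPow_jamesonSeq {p : ℝ} (hp : 1 < p) (k : ℕ) :
    lpPow p (jamesonSeq k) =
      ENNReal.ofReal (2 - ((2 : ℝ) ^ k)⁻¹ + 1 / ((2 : ℝ) ^ (p - 1) - 1)) *
        supNormE (jamesonSeq k) ^ (p - 1) := by
  have hD : 1 < (2 : ℝ) ^ (p - 1) := Real.one_lt_rpow one_lt_two (by linarith)
  have h2p : (2 : ℝ) ^ p = 2 * 2 ^ (p - 1) := by
    rw [mul_comm, ← Real.rpow_add_one two_ne_zero, sub_add_cancel]
  have hblock (n : ℕ) : ∑ j ∈ Ico (2 ^ n) (2 ^ (n + 1)), ENNReal.ofReal (|jamesonSeq k j| ^ p)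
      = ENNReal.ofReal (2 ^ n * (2 * 2 ^ (p - 1))⁻¹ ^ max k n) := by
    rw [sum_Ico_two_pow_jamesonSeq (fun y => ENNReal.ofReal (|y| ^ p)), ← ENNReal.ofReal_nsmul,
      abs_of_pos (by positivity), inv_two_pow_rpow, h2p, nsmul_eq_mul, Nat.cast_pow,
      Nat.cast_ofNat]
  have hseries := hasSum_two_pow_mul_pow_max hD k
  rw [lpPow, ENNReal.tsum_eq_add_tsum_sum_Ico_two_pow, jamesonSeq_zero, abs_zero,
    Real.zero_rpow (by linarith), ENNReal.ofReal_zero, zero_add]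
  simp only [hblock]
  rw [← ENNReal.ofReal_tsum_of_nonneg (fun n => by positivity) hseries.summable, hseries.tsum_eq,
    supNormE_jamesonSeq, ENNReal.ofReal_rpow_of_pos (by positivity), inv_two_pow_rpow,
    ENNReal.ofReal_mul (two_sub_inv_two_pow_add_one_div_pos hD k).le]

/-- The constant in Jameson's inequality cannot be improved below (2^p-1)/(2^(p-1)-1). -/
theorem jameson_constant_lower_bound (p : ℝ) (hp : 1 < p) :
    (∀ ε : ℝ, 0 < ε → ∃ x : ℕ → ℝ, x 0 = 0 ∧ s1NormE x = 1 ∧ 0 < supNormE x ∧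
      ENNReal.ofReal (((2 : ℝ) ^ p - 1) / ((2 : ℝ) ^ (p - 1) - 1) - ε) *
          supNormE x ^ (p - 1) < lpPow p x) ∧
    ∀ k : ℕ, 1 ≤ k →
      s1NormE (jamesonSeq k) = 1 ∧
      supNormE (jamesonSeq k) = ENNReal.ofReal (((2 : ℝ) ^ k)⁻¹) ∧
      lpPow p (jamesonSeq k) =
        ENNReal.ofReal (2 - ((2 : ℝ) ^ k)⁻¹ + 1 / ((2 : ℝ) ^ (p - 1) - 1)) *
          supNormE (jamesonSeq k) ^ (p - 1) := by
  refine ⟨fun ε hε => ?_, fun k _ =>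
    ⟨s1NormE_jamesonSeq k, supNormE_jamesonSeq k, lpPow_jamesonSeq hp k⟩⟩
  have hD : 1 < (2 : ℝ) ^ (p - 1) := Real.one_lt_rpow one_lt_two (by linarith)
  have hconst : ((2 : ℝ) ^ p - 1) / ((2 : ℝ) ^ (p - 1) - 1) = 2 + 1 / ((2 : ℝ) ^ (p - 1) - 1) := by
    rw [← sub_add_cancel p 1, Real.rpow_add_one two_ne_zero, add_sub_cancel_right]
    field_simp [(sub_pos.mpr hD).ne']
    ring
  obtain ⟨k, hk⟩ : ∃ k : ℕ, ((2 : ℝ) ^ k)⁻¹ < ε := by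
    simpa only [inv_pow] using exists_pow_lt_of_lt_one hε (inv_lt_one_of_one_lt₀ one_lt_two)
  have hsup : supNormE (jamesonSeq k) = ENNReal.ofReal (((2 : ℝ) ^ k)⁻¹) := supNormE_jamesonSeq k
  have hsup_pos : 0 < supNormE (jamesonSeq k) := by rw [hsup]; positivity
  refine ⟨jamesonSeq k, jamesonSeq_zero, s1NormE_jamesonSeq k, hsup_pos, ?_⟩
  rw [lpPow_jamesonSeq hp k, ENNReal.mul_lt_mul_iff_left
      (ENNReal.rpow_pos hsup_pos (hsup ▸ ENNReal.ofReal_ne_top)).ne'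
      (ENNReal.rpow_ne_top_of_nonneg (by linarith) (hsup ▸ ENNReal.ofReal_ne_top)),
    ENNReal.ofReal_lt_ofReal_iff (two_sub_inv_two_pow_add_one_div_pos hD k), hconst]
  linarith
end

section
/- Let M = {m₁ < m₂ < ⋯} be an infinite set of positive integers, let M' = 2M − 1 = {2m − 1 : m ∈ M} and M'' = 2M. If J is a nonempty finite set of indices with M''(J) = {2m_j : j ∈ J} a Schreier set, then τ₁(M(J)) ≤ 2 and τ₁(M'(J)) ≤ 2, where M(J) = {m_j : j ∈ J} and M'(J) = {2m_j − 1 : j ∈ J}. -/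
open Finset Filter

/-!
Let `k = min A` with `|A| ≤ 2k`. Then `A ∩ [k, 2k)` has at most `k` elements, all `≥ k`, and
`{2k} ∪ (A ∩ [2k, ∞))` has at most `(|A| - 1) + 1 ≤ 2k` elements, all `≥ 2k`; the point `2k` is
added so that the second block is nonempty. These two successive Schreier sets cover `A`, so
`τ₁(A) ≤ 2`. Both `M(J)` and `M'(J)` are images of `J` under strictly increasing maps `f`, so they
have `|J|` elements and minimum `f(min J)`, and `M''(J)` being Schreier says `|J| ≤ 2 m_{min J}`.
-/

theorem tau1_le_length_of_subset_chainUnion {A : Finset ℕ} {C : List (Finset ℕ)}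
    (hC : SchreierChainList C) (hA : A ⊆ chainUnion C) : tau1 A ≤ C.length :=
  Nat.sInf_le ⟨C, hC, rfl, hA⟩

theorem chainUnion_pair (F G : Finset ℕ) : chainUnion [F, G] = F ∪ G := by
  simp [chainUnion]

theorem schreierChainList_pair {F G : Finset ℕ} (hF : IsSchreier F) (hFne : F.Nonempty)
    (hG : IsSchreier G) (hGne : G.Nonempty) (hFG : ∀ a ∈ F, ∀ b ∈ G, a < b) :
    SchreierChainList [F, G] := by
  refine ⟨?_, List.isChain_pair.mpr hFG⟩
  simp only [List.mem_cons, List.not_mem_nil, or_false]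
  rintro H (rfl | rfl)
  exacts [⟨hF, hFne⟩, ⟨hG, hGne⟩]

theorem isSchreier_of_card_le_of_forall_le {F : Finset ℕ} {k : ℕ} (hcard : #F ≤ k)
    (hk : ∀ a ∈ F, k ≤ a) : IsSchreier F :=
  fun hF => hcard.trans (F.le_min' hF k hk)

theorem tau1_le_two_of_card_le_two_mul_min' (A : Finset ℕ) (hA : A.Nonempty)
    (hcard : #A ≤ 2 * A.min' hA) : tau1 A ≤ 2 := by
  set k := A.min' hA
  have hk : ∀ a ∈ A, k ≤ a := fun a ha => A.min'_le a ha
  have hk_pos : 0 < k := by have := hA.card_pos; omega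
  set F := A.filter (· < 2 * k)
  set G := insert (2 * k) (A.filter (2 * k ≤ ·))
  have hkF : k ∈ F := mem_filter.mpr ⟨A.min'_mem hA, by omega⟩
  have hF_card : #F ≤ k := by
    calc #F ≤ #(Ico k (2 * k)) :=
          card_le_card fun a ha => mem_Ico.mpr ⟨hk a (mem_filter.mp ha).1, (mem_filter.mp ha).2⟩
      _ = k := by rw [Nat.card_Ico]; omega
  have hG_card : #G ≤ 2 * k := by
    have hsplit : #F + #(A.filter (2 * k ≤ ·)) = #A := by
      simpa only [not_lt] using card_filter_add_card_filter_not (s := A) (· < 2 * k)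
    have : #G ≤ #(A.filter (2 * k ≤ ·)) + 1 := card_insert_le _ _
    have := card_pos.mpr ⟨k, hkF⟩
    omega
  have hG_ge : ∀ b ∈ G, 2 * k ≤ b := by
    simp only [G, mem_insert, mem_filter]
    rintro b (rfl | ⟨-, hb⟩) <;> omega
  have hchain : SchreierChainList [F, G] :=
    schreierChainList_pair
      (isSchreier_of_card_le_of_forall_le hF_card fun a ha => hk a (mem_filter.mp ha).1)
      ⟨k, hkF⟩ (isSchreier_of_card_le_of_forall_le hG_card hG_ge) (insert_nonempty _ _)
      fun a ha b hb => (mem_filter.mp ha).2.trans_le (hG_ge b hb)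
  refine tau1_le_length_of_subset_chainUnion hchain fun a ha => ?_
  rw [chainUnion_pair, mem_union]
  by_cases h : a < 2 * k
  · exact .inl (mem_filter.mpr ⟨ha, h⟩)
  · exact .inr (mem_insert_of_mem (mem_filter.mpr ⟨ha, by omega⟩))

theorem card_le_apply_min'_of_isSchreier_image {f : ℕ → ℕ} (hf : StrictMono f)
    {J : Finset ℕ} (hJ : J.Nonempty) (hS : IsSchreier (J.image f)) :
    #J ≤ f (J.min' hJ) := by
  simpa only [card_image_of_injective _ hf.injective, min'_image hf.monotone] using
    hS (hJ.image f)

theorem tau1_image_le_two {f : ℕ → ℕ} (hf : StrictMono f) {J : Finset ℕ} (hJ : J.Nonempty)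
    (hcard : #J ≤ 2 * f (J.min' hJ)) : tau1 (J.image f) ≤ 2 :=
  tau1_le_two_of_card_le_two_mul_min' _ (hJ.image f) <| by
    rwa [card_image_of_injective _ hf.injective, min'_image hf.monotone]

theorem strictMono_two_mul_sub_one : StrictMono fun n : ℕ => 2 * n - 1 :=
  fun a b h => by dsimp only; omega

theorem tau1_le_two_of_double_schreier_general (M : Set ℕ) (hM : M.Infinite)
    (J : Finset ℕ) (hJ : J.Nonempty)
    (hS : IsSchreier (J.image fun j => 2 * enumSet M j)) :
    tau1 (J.image (enumSet M)) ≤ 2 ∧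
      tau1 (J.image fun j => 2 * enumSet M j - 1) ≤ 2 := by
  have he : StrictMono (enumSet M) := Nat.nth_strictMono hM
  have hcard : #J ≤ 2 * enumSet M (J.min' hJ) :=
    card_le_apply_min'_of_isSchreier_image ((strictMono_mul_left_of_pos two_pos).comp he) hJ hS
  refine ⟨tau1_image_le_two he hJ hcard,
    tau1_image_le_two (strictMono_two_mul_sub_one.comp he) hJ ?_⟩
  -- `#J ≥ 1` forces `enumSet M (J.min' hJ) ≥ 1`, so the truncated `2 * m - 1` is at least `m`.
  have := hJ.card_pos
  simp only [Function.comp_apply]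
  omega

/-- If M''(J) = {2m_j : j ∈ J} is a Schreier set, then τ₁(M(J)) ≤ 2 and τ₁(M'(J)) ≤ 2. -/
theorem tau1_le_two_of_double_schreier (M : Set ℕ) (hM : M.Infinite)
    (hMpos : ∀ m ∈ M, 0 < m) (J : Finset ℕ) (hJ : J.Nonempty)
    (hS : IsSchreier (J.image fun j => 2 * enumSet M j)) :
    tau1 (J.image (enumSet M)) ≤ 2 ∧
      tau1 (J.image fun j => 2 * enumSet M j - 1) ≤ 2 :=
  tau1_le_two_of_double_schreier_general M hM J hJ hS
end

section
/- There exists a partition of the positive integers into finite successive intervals G₁ < F₂ < G₂ < F₃ < G₃ < ⋯ (with F₁ = ∅) such that for each n, Gₙ is the union of n successive maximal Schreier sets, and |Fₙ| = Σ_{m=1}^{n−1}(|F_m| + |G_m|) for each n ≥ 2. -/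
/-!
Write `Fₙ ∪ Gₙ = [aₙ, aₙ₊₁)` with `a₁ = 1`. The earlier blocks fill `[1, aₙ)`, so the cardinality
condition forces `Fₙ = [aₙ, 2aₙ - 1)`. For `s ≥ 1` the interval `[s, 2ⁿs)` is the union of the
`n` successive maximal Schreier sets `[2ⁱs, 2ⁱ⁺¹s)`, `i < n`, so `Gₙ = [s, 2ⁿs)` with
`s = 2aₙ - 1` works, i.e. `aₙ₊₁ = 2ⁿ(2aₙ - 1)`.
-/

open Finset Filter

theorem exists_le_and_lt_succ {α : Type*} [LinearOrder α] (f : ℕ → α) {x : α} (h₀ : f 0 ≤ x) :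
    ∀ {n}, x < f n → ∃ i < n, f i ≤ x ∧ x < f (i + 1)
  | 0, hn => absurd h₀ (not_le.2 hn)
  | n + 1, hn => by
    rcases lt_or_ge x (f n) with hx | hx
    · obtain ⟨i, hi, hxi⟩ := exists_le_and_lt_succ f h₀ hx
      exact ⟨i, Nat.lt_succ_of_lt hi, hxi⟩
    · exact ⟨n, Nat.lt_succ_self n, hx, hn⟩

theorem exists_Ico_eq_Icc (a : ℕ) {b : ℕ} (hb : 0 < b) : ∃ c d, Ico a b = Icc c d :=
  ⟨a, b - 1, by rw [← Ico_add_one_right_eq_Icc, Nat.sub_one_add_one_eq_of_pos hb]⟩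

theorem isMaxSchreier_Ico_two_mul {a : ℕ} (ha : 0 < a) : IsMaxSchreier (Ico a (2 * a)) := by
  have hne : (Ico a (2 * a)).Nonempty := nonempty_Ico.2 (by omega)
  refine ⟨hne, ?_⟩
  rw [Nat.card_Ico, le_antisymm (min'_le _ _ (left_mem_Ico.2 (by omega)))
    (le_min' _ _ _ fun y hy => (mem_Ico.1 hy).1)]
  omega

theorem exists_maxSchreier_decomposition_Ico {s : ℕ} (hs : 0 < s) (n : ℕ) :
    ∃ H : Fin n → Finset ℕ, (∀ i, IsMaxSchreier (H i)) ∧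
      (∀ i j : Fin n, i < j → ∀ a ∈ H i, ∀ b ∈ H j, a < b) ∧
      Ico s (2 ^ n * s) = univ.biUnion H := by
  have hmono : Monotone fun i : ℕ => 2 ^ i * s := fun i j hij =>
    Nat.mul_le_mul_right s (Nat.pow_le_pow_right two_pos hij)
  refine ⟨fun i => Ico (2 ^ (i : ℕ) * s) (2 ^ ((i : ℕ) + 1) * s), fun i => ?_,
    fun i j hij a ha b hb => ?_, ?_⟩
  · simpa only [pow_succ, mul_comm _ 2, mul_assoc] using
      isMaxSchreier_Ico_two_mul (by positivity : 0 < 2 ^ (i : ℕ) * s)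
  · exact (mem_Ico.1 ha).2.trans_le ((hmono (Nat.succ_le_of_lt hij)).trans (mem_Ico.1 hb).1)
  · ext x
    simp only [mem_Ico, mem_biUnion, mem_univ, true_and]
    constructor
    · rintro ⟨h₀, hn⟩
      obtain ⟨i, hi, hx⟩ := exists_le_and_lt_succ (fun i => 2 ^ i * s)
        (by simpa using h₀) hn
      exact ⟨⟨i, hi⟩, hx⟩
    · rintro ⟨i, hlo, hhi⟩
      exact ⟨(Nat.le_mul_of_pos_left s (by positivity)).trans hlo, hhi.trans_le (hmono i.isLt)⟩

/-- `fStart n` is the left end of `Fₙ ∪ Gₙ`; index `0` is a dummy with `fStart 0 = fStart 1`. -/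
def fStart : ℕ → ℕ
  | 0 => 1
  | n + 1 => 2 ^ n * (2 * fStart n - 1)

def gStart (n : ℕ) : ℕ := 2 * fStart n - 1

def mpbF (n : ℕ) : Finset ℕ := Ico (fStart n) (gStart n)

def mpbG (n : ℕ) : Finset ℕ := Ico (gStart n) (fStart (n + 1))

theorem fStart_succ (n : ℕ) : fStart (n + 1) = 2 ^ n * gStart n := rfl

theorem one_le_fStart (n : ℕ) : 1 ≤ fStart n := by
  induction n with
  | zero => rfl
  | succ n ih => exact Nat.one_le_iff_ne_zero.2 (mul_ne_zero (by positivity) (by omega))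

theorem fStart_le_gStart (n : ℕ) : fStart n ≤ gStart n := by
  have := one_le_fStart n
  unfold gStart; omega

theorem gStart_pos (n : ℕ) : 0 < gStart n :=
  (one_le_fStart n).trans (fStart_le_gStart n)

theorem gStart_le_fStart_succ (n : ℕ) : gStart n ≤ fStart (n + 1) :=
  Nat.le_mul_of_pos_left _ (by positivity)

theorem lt_fStart_succ (n : ℕ) : n < fStart (n + 1) := by
  induction n with
  | zero => decide
  | succ n ih =>
    have h : 2 * gStart (n + 1) ≤ fStart (n + 1 + 1) :=
      Nat.mul_le_mul_right _ (Nat.le_self_pow (Nat.succ_ne_zero n) 2)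
    have := fStart_le_gStart (n + 1)
    unfold gStart at h this; omega

theorem mpbF_union_mpbG (n : ℕ) : mpbF n ∪ mpbG n = Ico (fStart n) (fStart (n + 1)) :=
  Ico_union_Ico_eq_Ico (fStart_le_gStart n) (gStart_le_fStart_succ n)

theorem card_mpbF (n : ℕ) : #(mpbF n) = fStart n - 1 := by
  rw [mpbF, Nat.card_Ico, gStart]; omega

theorem sum_card_mpbF_add_card_mpbG {n : ℕ} (hn : 1 ≤ n) :
    ∑ m ∈ Ico 1 n, (#(mpbF m) + #(mpbG m)) = fStart n - 1 := by
  induction n, hn using Nat.le_induction with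
  | base => rfl
  | succ n hn ih =>
    rw [sum_Ico_succ_top hn, ih, mpbF, mpbG, Nat.card_Ico, Nat.card_Ico]
    have := one_le_fStart n
    have := fStart_le_gStart n
    have := gStart_le_fStart_succ n
    omega

/-- The Manoussakis–Pelczar-Barwacz construction: a partition of the positive integers
into finite successive intervals G₁ < F₂ < G₂ < F₃ < ⋯ (F₁ = ∅) with Gₙ a union of n
successive maximal Schreier sets and |Fₙ| = Σ_{m<n}(|F_m| + |G_m|). -/
theorem mpb_construction :
    ∃ F G : ℕ → Finset ℕ,
      F 1 = ∅ ∧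
      (∀ n, 1 ≤ n → (∃ a b, F n = Finset.Icc a b) ∧ ∃ a b, G n = Finset.Icc a b) ∧
      (∀ n, 1 ≤ n → ∃ H : Fin n → Finset ℕ, (∀ i, IsMaxSchreier (H i)) ∧
        (∀ i j : Fin n, i < j → ∀ a ∈ H i, ∀ b ∈ H j, a < b) ∧
        G n = Finset.univ.biUnion H) ∧
      (∀ n, 1 ≤ n → ∀ a ∈ F n, ∀ b ∈ G n, a < b) ∧
      (∀ n, 1 ≤ n → ∀ a ∈ G n, ∀ b ∈ F (n + 1), a < b) ∧
      (∀ n, 1 ≤ n → ∀ a ∈ F n ∪ G n, 1 ≤ a) ∧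
      (∀ m : ℕ, 1 ≤ m → ∃ n, 1 ≤ n ∧ m ∈ F n ∪ G n) ∧
      (∀ n, 2 ≤ n → (F n).card = ∑ m ∈ Finset.Ico 1 n, ((F m).card + (G m).card)) := by
  have hlt {x y z : ℕ} : ∀ a ∈ Ico x y, ∀ b ∈ Ico y z, a < b :=
    fun a ha b hb => (mem_Ico.1 ha).2.trans_le (mem_Ico.1 hb).1
  refine ⟨mpbF, mpbG, rfl, fun n _ => ?_, fun n _ => ?_, fun n _ => hlt, fun n _ => hlt,
    fun n _ a ha => ?_, fun m hm => ?_, fun n hn => ?_⟩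
  · exact ⟨exists_Ico_eq_Icc _ (gStart_pos n), exists_Ico_eq_Icc _ (one_le_fStart (n + 1))⟩
  · rw [mpbG, fStart_succ]
    exact exists_maxSchreier_decomposition_Ico (gStart_pos n) n
  · rw [mpbF_union_mpbG] at ha
    exact (one_le_fStart n).trans (mem_Ico.1 ha).1
  · obtain ⟨i, -, hi⟩ := exists_le_and_lt_succ (fun i => fStart (i + 1))
      ((one_le_fStart 1).trans hm) (lt_fStart_succ m)
    exact ⟨i + 1, Nat.le_add_left 1 i, mpbF_union_mpbG _ ▸ mem_Ico.2 hi⟩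
  · rw [card_mpbF, sum_card_mpbF_add_card_mpbG (by omega)]
end
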